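/- arXiv:0704.0473 — 2 statements merged into one kernel-verified Lean document; each statement's English description precedes it below -/
import Mathlib

section
/- If u1, u2 : [0,1] → [−1,1] are integrable, x1 is absolutely continuous with ẋ1(t) = exp(u1(t)) + u1(t) + u2(t) a.e., x1(0) = 0, x1(1) = 2, x2 absolutely continuous with ẋ2 = u2, x2(0) = 0, x2(1) = 1, then ∫₀¹ (u1(t)² + u2(t)²) dt ≥ 1. -/
open MeasureTheory

/- Pointwise, `u₁² + u₂² = (2u₂ - 1) + u₁² + (u₂ - 1)² ≥ 2u₂ - 1`; integrating over `[0, 1]` and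
using `∫ u₂ = x₂(1) - x₂(0) = 1` gives `∫ (u₁² + u₂²) ≥ 2 - 1 = 1`. -/

theorem IntervalIntegrable.sq_of_abs_le {u : ℝ → ℝ} {a b C : ℝ}
    (hu : IntervalIntegrable u volume a b) (hC : ∀ t ∈ Set.uIcc a b, |u t| ≤ C) :
    IntervalIntegrable (fun t => u t ^ 2) volume a b := by
  rw [intervalIntegrable_iff] at hu ⊢
  have hbound : ∀ᵐ t ∂volume.restrict (Set.uIoc a b), ‖u t‖ ≤ C :=
    ae_restrict_of_forall_mem measurableSet_uIoc fun t ht => hC t (Set.uIoc_subset_uIcc ht)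
  simp only [pow_two]
  exact hu.mul_bdd hu.aestronglyMeasurable hbound

theorem two_mul_integral_sub_le_integral_sq_add_sq {u v : ℝ → ℝ} {a b : ℝ} (hab : a ≤ b)
    (hv : IntervalIntegrable v volume a b)
    (hu_sq : IntervalIntegrable (fun t => u t ^ 2) volume a b)
    (hv_sq : IntervalIntegrable (fun t => v t ^ 2) volume a b) :
    2 * (∫ t in a..b, v t) - (b - a) ≤ ∫ t in a..b, (u t ^ 2 + v t ^ 2) := by
  have hlinear : ∫ t in a..b, (2 * v t - 1) = 2 * (∫ t in a..b, v t) - (b - a) := by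
    simp [intervalIntegral.integral_sub (hv.const_mul 2) intervalIntegrable_const]
  rw [← hlinear]
  refine intervalIntegral.integral_mono_on hab ((hv.const_mul 2).sub intervalIntegrable_const)
    (hu_sq.add hv_sq) fun t _ => ?_
  nlinarith [sq_nonneg (u t), sq_nonneg (v t - 1)]

theorem problem8_lower_bound_general (u1 u2 x2 : ℝ → ℝ)
    (hu1i : IntervalIntegrable u1 volume 0 1)
    (hu2i : IntervalIntegrable u2 volume 0 1)
    (hu1 : ∀ t ∈ Set.Icc (0 : ℝ) 1, u1 t ∈ Set.Icc (-1 : ℝ) 1)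
    (hu2 : ∀ t ∈ Set.Icc (0 : ℝ) 1, u2 t ∈ Set.Icc (-1 : ℝ) 1)
    (hx2 : ∀ t ∈ Set.Icc (0 : ℝ) 1, x2 t = x2 0 + ∫ τ in (0 : ℝ)..t, u2 τ)
    (hb2a : x2 0 = 0) (hb2b : x2 1 = 1) :
    1 ≤ ∫ t in (0 : ℝ)..1, ((u1 t) ^ 2 + (u2 t) ^ 2) := by
  have hu2_integral : ∫ t in (0 : ℝ)..1, u2 t = 1 := by
    linarith [hx2 1 (Set.right_mem_Icc.mpr zero_le_one)]
  have hu1_sq := hu1i.sq_of_abs_le fun t ht =>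
    abs_le.mpr (hu1 t (by rwa [Set.uIcc_of_le zero_le_one] at ht))
  have hu2_sq := hu2i.sq_of_abs_le fun t ht =>
    abs_le.mpr (hu2 t (by rwa [Set.uIcc_of_le zero_le_one] at ht))
  calc (1 : ℝ) = 2 * (∫ t in (0 : ℝ)..1, u2 t) - (1 - 0) := by rw [hu2_integral]; norm_num
    _ ≤ _ := two_mul_integral_sub_le_integral_sq_add_sq zero_le_one hu2i hu1_sq hu2_sq

theorem problem8_lower_bound (u1 u2 x1 x2 : ℝ → ℝ)
    (hu1i : IntervalIntegrable u1 volume 0 1)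
    (hu2i : IntervalIntegrable u2 volume 0 1)
    (hu1 : ∀ t ∈ Set.Icc (0 : ℝ) 1, u1 t ∈ Set.Icc (-1 : ℝ) 1)
    (hu2 : ∀ t ∈ Set.Icc (0 : ℝ) 1, u2 t ∈ Set.Icc (-1 : ℝ) 1)
    (hx1 : ∀ t ∈ Set.Icc (0 : ℝ) 1,
      x1 t = x1 0 + ∫ τ in (0 : ℝ)..t, (Real.exp (u1 τ) + u1 τ + u2 τ))
    (hx2 : ∀ t ∈ Set.Icc (0 : ℝ) 1, x2 t = x2 0 + ∫ τ in (0 : ℝ)..t, u2 τ)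
    (hb1a : x1 0 = 0) (hb1b : x1 1 = 2) (hb2a : x2 0 = 0) (hb2b : x2 1 = 1) :
    1 ≤ ∫ t in (0 : ℝ)..1, ((u1 t) ^ 2 + (u2 t) ^ 2) :=
  problem8_lower_bound_general u1 u2 x2 hu1i hu2i hu1 hu2 hx2 hb2a hb2b
end

section
/- Let a < b and xa, xb ∈ ℝ. Define x*(t) = −t²/4 + c1·t + c2 where c1, c2 are the unique constants with x*(a) = xa and x*(b) = xb. Then for every absolutely continuous x : [a,b] → ℝ with square-integrable derivative satisfying x(a) = xa and x(b) = xb, one has ∫ₐᵇ (ẋ(t)² + t·ẋ(t)) dt ≥ ∫ₐᵇ (ẋ*(t)² + t·ẋ*(t)) dt, with equality iff x = x*. -/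
open MeasureTheory
open Filter Metric

lemma ae_zero_of_forall_intervalIntegral_zero {a b : ℝ} (hab : a ≤ b) {f : ℝ → ℝ}
    (hf : IntervalIntegrable f volume a b)
    (h : ∀ t ∈ Set.Icc a b, ∫ τ in a..t, f τ = 0) :
    ∀ᵐ t ∂(volume.restrict (Set.Ioc a b)), f t = 0 := by
  set g : ℝ → ℝ := (Set.Ioc a b).indicator f with hg
  have hfon : IntegrableOn f (Set.Ioc a b) volume :=
    (intervalIntegrable_iff_integrableOn_Ioc_of_le hab).mp hf
  have hgint : Integrable g volume := by
    rw [hg, integrable_indicator_iff measurableSet_Ioc]; exact hfon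
  have hgii : ∀ c d : ℝ, IntervalIntegrable g volume c d := fun c d => hgint.intervalIntegrable
  have hg0 : ∀ τ, τ ∉ Set.Ioc a b → g τ = 0 := fun τ hτ => Set.indicator_of_notMem hτ _
  -- F(t) := ∫ a..t g = 0 for all t
  have hF : ∀ t : ℝ, ∫ τ in a..t, g τ = 0 := by
    intro t
    rcases lt_trichotomy t a with ht | ht | ht
    · rw [intervalIntegral.integral_symm]
      have : ∫ τ in t..a, g τ = ∫ τ in t..a, (0:ℝ) := by
        apply intervalIntegral.integral_congr
        intro τ hτ
        rw [Set.uIcc_of_le ht.le] at hτ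
        exact hg0 τ (fun hm => absurd hm.1 (not_lt.mpr hτ.2))
      simp [this]
    · simp [ht]
    · rcases le_or_gt t b with htb | htb
      · have : ∫ τ in a..t, g τ = ∫ τ in a..t, f τ := by
          apply intervalIntegral.integral_congr_ae
          filter_upwards [] with τ hτ
          rw [Set.uIoc_of_le ht.le] at hτ
          exact Set.indicator_of_mem (show τ ∈ Set.Ioc a b from ⟨hτ.1, hτ.2.trans htb⟩) f
        rw [this]; exact h t ⟨ht.le, htb⟩
      · rw [← intervalIntegral.integral_add_adjacent_intervals (hgii a b) (hgii b t)]
        have h1 : ∫ τ in a..b, g τ = ∫ τ in a..b, f τ := by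
          apply intervalIntegral.integral_congr_ae
          filter_upwards [] with τ hτ
          rw [Set.uIoc_of_le hab] at hτ
          exact Set.indicator_of_mem hτ f
        have h2 : ∫ τ in b..t, g τ = ∫ τ in b..t, (0:ℝ) := by
          apply intervalIntegral.integral_congr_ae
          filter_upwards [] with τ hτ
          rw [Set.uIoc_of_le htb.le] at hτ
          exact hg0 τ (fun hm => absurd hm.2 (not_le.mpr hτ.1))
        rw [h1, h2, h b ⟨hab, le_refl b⟩]; simp
  -- hence ∫ over any closed ball is 0
  have hball : ∀ (x r : ℝ), ∫ τ in closedBall x r, g τ = 0 := by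
    intro x r
    rcases le_or_gt 0 r with hr | hr
    · rw [Real.closedBall_eq_Icc, integral_Icc_eq_integral_Ioc,
        ← intervalIntegral.integral_of_le (by linarith : x - r ≤ x + r)]
      have e := intervalIntegral.integral_add_adjacent_intervals
        (hgii a (x - r)) (hgii (x - r) (x + r))
      rw [hF (x - r), hF (x + r), zero_add] at e
      exact e
    · rw [closedBall_eq_empty.mpr hr]; simp
  -- Lebesgue differentiation
  have hae : ∀ᵐ x ∂(volume : Measure ℝ), g x = 0 := by
    filter_upwards [IsUnifLocDoublingMeasure.ae_tendsto_average (volume : Measure ℝ)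
      hgint.locallyIntegrable 1] with x hx
    have hδ : Tendsto (fun n : ℕ => (1:ℝ)/(n+1)) atTop (nhdsWithin 0 (Set.Ioi 0)) := by
      apply tendsto_nhdsWithin_of_tendsto_nhds_of_eventually_within
      · exact tendsto_one_div_add_atTop_nhds_zero_nat
      · filter_upwards [] with n; exact Set.mem_Ioi.mpr (by positivity)
    have hmem : ∀ᶠ n : ℕ in atTop, x ∈ closedBall x (1 * ((1:ℝ)/(n+1))) := by
      filter_upwards [] with n
      exact mem_closedBall_self (by positivity)
    have hlim := hx (fun _ => x) (fun n : ℕ => (1:ℝ)/(n+1)) hδ hmem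
    have hzero : Tendsto (fun n : ℕ => ⨍ y in closedBall x ((1:ℝ)/(n+1)), g y) atTop (nhds 0) := by
      have he : (fun n : ℕ => ⨍ y in closedBall x ((1:ℝ)/(n+1)), g y) = fun _ => (0:ℝ) := by
        funext n; rw [setAverage_eq, hball]; simp
      rw [he]; exact tendsto_const_nhds
    exact tendsto_nhds_unique hlim hzero
  filter_upwards [ae_restrict_of_ae hae, ae_restrict_mem measurableSet_Ioc] with t htg htm
  rw [← Set.indicator_of_mem htm f]; exact htg

/-- The constant `c1` determined by the boundary conditions in Example 2. -/
noncomputable def cOne (a b xa xb : ℝ) : ℝ := (xb - xa) / (b - a) + (a + b) / 4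

/-- The constant `c2` determined by the boundary conditions in Example 2. -/
noncomputable def cTwo (a b xa xb : ℝ) : ℝ := xa + a ^ 2 / 4 - cOne a b xa xb * a

/-- The extremal of Example 2. -/
noncomputable def xStar (a b xa xb t : ℝ) : ℝ :=
  -t ^ 2 / 4 + cOne a b xa xb * t + cTwo a b xa xb

theorem example2_absolute_minimizer (a b xa xb : ℝ) (hab : a < b) (x x' : ℝ → ℝ)
    (hx'i : IntervalIntegrable x' volume a b)
    (hx'sq : IntervalIntegrable (fun t => (x' t) ^ 2) volume a b)
    (hAC : ∀ t ∈ Set.Icc a b, x t = x a + ∫ τ in a..t, x' τ)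
    (ha : x a = xa) (hb : x b = xb) :
    (∫ t in a..b, ((-t / 2 + cOne a b xa xb) ^ 2 + t * (-t / 2 + cOne a b xa xb)))
      ≤ (∫ t in a..b, ((x' t) ^ 2 + t * x' t)) ∧
    ((∫ t in a..b, ((x' t) ^ 2 + t * x' t))
        = (∫ t in a..b, ((-t / 2 + cOne a b xa xb) ^ 2 + t * (-t / 2 + cOne a b xa xb)))
      ↔ ∀ t ∈ Set.Icc a b, x t = xStar a b xa xb t) := by
  set c := cOne a b xa xb with hc
  set u : ℝ → ℝ := fun t => -t / 2 + c with hu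
  set f : ℝ → ℝ := fun t => x' t - u t with hfdef
  have hcu : Continuous u := by continuity
  -- integral of u over s..t
  have huval : ∀ s t : ℝ, (∫ τ in s..t, u τ) = -(t^2 - s^2)/4 + c*(t - s) := by
    intro s t
    have h1 : (∫ τ in s..t, u τ) = ∫ τ in s..t, ((-1/2) * τ + c) :=
      intervalIntegral.integral_congr (fun τ _ => by simp only [hu]; ring)
    rw [h1, intervalIntegral.integral_add
      (Continuous.intervalIntegrable (by fun_prop : Continuous fun τ : ℝ => -1/2 * τ) s t)
      (intervalIntegrable_const),
      intervalIntegral.integral_const_mul, integral_id,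
      intervalIntegral.integral_const]
    simp only [smul_eq_mul]; ring
  -- integrability facts
  have hui : ∀ s t : ℝ, IntervalIntegrable u volume s t := fun s t => hcu.intervalIntegrable s t
  have hfi : IntervalIntegrable f volume a b := hx'i.sub (hui a b)
  have htx' : IntervalIntegrable (fun t => t * x' t) volume a b :=
    hx'i.continuousOn_mul continuous_id.continuousOn
  have hux' : IntervalIntegrable (fun t => u t * x' t) volume a b :=
    hx'i.continuousOn_mul hcu.continuousOn
  have hf2 : IntervalIntegrable (fun t => f t ^ 2) volume a b := by
    have he : (fun t => f t ^ 2) = fun t => ((x' t) ^ 2 - 2 * (u t * x' t)) + (u t)^2 := by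
      funext t; simp only [hfdef]; ring
    rw [he]
    exact (hx'sq.sub (hux'.const_mul 2)).add ((hcu.pow 2).intervalIntegrable a b)
  have hA : IntervalIntegrable (fun t => (x' t) ^ 2 + t * x' t) volume a b := hx'sq.add htx'
  have hB : IntervalIntegrable (fun t => (u t) ^ 2 + t * u t) volume a b :=
    ((hcu.pow 2).add (continuous_id.mul hcu)).intervalIntegrable a b
  -- ∫ f = 0
  have hxb : ∫ τ in a..b, x' τ = xb - xa := by
    have := hAC b ⟨hab.le, le_refl b⟩
    rw [hb, ha] at this; linarith
  have hFab : ∫ τ in a..b, f τ = 0 := by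
    simp only [hfdef]
    rw [intervalIntegral.integral_sub hx'i (hui a b), hxb, huval a b]
    have hba : b - a ≠ 0 := ne_of_gt (by linarith)
    rw [hc]; unfold cOne; field_simp; ring
  -- key: A - B = ∫ f²
  have hkey : (∫ t in a..b, ((x' t) ^ 2 + t * x' t)) - (∫ t in a..b, ((u t) ^ 2 + t * u t))
      = ∫ t in a..b, f t ^ 2 := by
    rw [← intervalIntegral.integral_sub hA hB]
    have he : (fun t => ((x' t) ^ 2 + t * x' t) - ((u t) ^ 2 + t * u t))
        = fun t => f t ^ 2 + (2*c) * f t := by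
      funext t; simp only [hfdef, hu]; ring
    rw [he, intervalIntegral.integral_add hf2 (hfi.const_mul (2*c)),
      intervalIntegral.integral_const_mul, hFab, mul_zero, add_zero]
  have hnn : 0 ≤ ∫ t in a..b, f t ^ 2 :=
    intervalIntegral.integral_nonneg hab.le (fun t _ => sq_nonneg _)
  constructor
  · linarith [hkey, hnn]
  · rw [show ((∫ t in a..b, ((x' t) ^ 2 + t * x' t))
        = ∫ t in a..b, ((-t / 2 + c) ^ 2 + t * (-t / 2 + c)))
      ↔ (∫ t in a..b, f t ^ 2) = 0 from by
        constructor
        · intro h; rw [← hkey]; simp only [hu] at h ⊢; linarith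
        · intro h; simp only [hu] at hkey ⊢; linarith]
    constructor
    · intro h0
      have hae : ∀ᵐ t ∂(volume.restrict (Set.Ioc a b)), f t = 0 := by
        have := (intervalIntegral.integral_eq_zero_iff_of_le_of_nonneg_ae hab.le
          (Filter.Eventually.of_forall (fun t => sq_nonneg (f t))) hf2).mp h0
        filter_upwards [this] with t ht
        exact pow_eq_zero_iff (n := 2) (by norm_num) |>.mp ht
      intro t ht
      have hxt := hAC t ht
      have hint : ∫ τ in a..t, x' τ = ∫ τ in a..t, u τ := by
        have hsub : Set.Ioc a t ⊆ Set.Ioc a b := Set.Ioc_subset_Ioc_right ht.2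
        have haet : ∀ᵐ τ ∂(volume.restrict (Set.Ioc a t)), f τ = 0 :=
          ae_restrict_of_ae_restrict_of_subset hsub hae
        apply intervalIntegral.integral_congr_ae
        rw [Set.uIoc_of_le ht.1]
        filter_upwards [(ae_restrict_iff' measurableSet_Ioc).mp haet] with τ hτ hmem
        have := hτ hmem
        simp only [hfdef] at this; linarith
      rw [hxt, ha, hint, huval a t]
      unfold xStar cTwo; rw [← hc]; ring
    · intro hstar
      have hiz : ∀ t ∈ Set.Icc a b, ∫ τ in a..t, f τ = 0 := by
        intro t ht
        have hxt := hAC t ht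
        rw [hstar t ht, ha] at hxt
        have hx'it : IntervalIntegrable x' volume a t := hx'i.mono_set (by
          rw [Set.uIcc_of_le ht.1, Set.uIcc_of_le hab.le]
          exact Set.Icc_subset_Icc_right ht.2)
        simp only [hfdef]
        rw [intervalIntegral.integral_sub hx'it (hui a t), huval a t]
        have : ∫ τ in a..t, x' τ = xStar a b xa xb t - xa := by linarith
        rw [this]; unfold xStar cTwo; rw [← hc]; ring
      have hae := ae_zero_of_forall_intervalIntegral_zero hab.le hfi hiz
      have : (∫ t in a..b, f t ^ 2) = ∫ t in a..b, (0:ℝ) := by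
        apply intervalIntegral.integral_congr_ae
        rw [Set.uIoc_of_le hab.le]
        filter_upwards [(ae_restrict_iff' measurableSet_Ioc).mp hae] with τ hτ hm
        rw [hτ hm]; ring
      rw [this]; simp
end
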